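/- arXiv:1601.05353 — 8 statements merged into one kernel-verified Lean document; each statement's English description precedes it below -/
import Mathlib

section
/- A SUBSET-SUM instance I = (B, A_1, ..., A_n) admits a subset I ⊆ {1,...,n} with Σ_{i∈I} A_i = B if and only if there exist ε_1,...,ε_n ∈ {0,1} such that T_I^[n](1, 0, ε_1, ..., ε_n) = (n+1, B). -/
/-- Transition function of the SUBSET-SUM instance `(B, A)` with `n` items:
a configuration is `(i, σ, ε)`. -/
def TI (n B : ℕ) (A : ℕ → ℕ) (c : ℕ × ℕ × (ℕ → ℕ)) : ℕ × ℕ × (ℕ → ℕ) :=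
  if c.1 = n + 1 then c
  else (c.1 + 1, min (B + 1) (c.2.1 + c.2.2 c.1 * A c.1), c.2.2)

lemma TI_iter (n B k : ℕ) (A ε : ℕ → ℕ) (hk : k ≤ n) :
    (TI n B A)^[k] (1, 0, ε)
      = (k + 1, min (B + 1) (∑ i ∈ Finset.Icc 1 k, ε i * A i), ε) := by
  induction k with
  | zero => simp
  | succ k ih =>
    rw [Function.iterate_succ_apply', ih (by omega)]
    unfold TI
    simp only
    rw [if_neg (by omega : k + 1 ≠ n + 1)]
    rw [Finset.sum_Icc_succ_top (by omega : 1 ≤ k + 1)]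
    refine Prod.ext rfl (Prod.ext ?_ rfl)
    simp only
    generalize ∑ i ∈ Finset.Icc 1 k, ε i * A i = S
    omega

theorem subset_sum_iff_reach (n B : ℕ) (A : ℕ → ℕ) (hA : ∀ j, A j ≤ B) :
    (∃ S : Finset ℕ, S ⊆ Finset.Icc 1 n ∧ ∑ i ∈ S, A i = B) ↔
      ∃ ε : ℕ → ℕ, (∀ j, ε j ≤ 1) ∧ (TI n B A)^[n] (1, 0, ε) = (n + 1, B, ε) := by
  constructor
  · rintro ⟨S, hS, hsum⟩
    refine ⟨fun j => if j ∈ S then 1 else 0, fun j => by simp only []; split <;> omega, ?_⟩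
    rw [TI_iter n B n A _ le_rfl]
    have : ∑ i ∈ Finset.Icc 1 n, (if i ∈ S then 1 else 0) * A i = B := by
      have : ∑ i ∈ Finset.Icc 1 n, (if i ∈ S then 1 else 0) * A i
          = ∑ i ∈ Finset.Icc 1 n, (if i ∈ S then A i else 0) := by
        apply Finset.sum_congr rfl; intro i _; split <;> simp
      rw [this, Finset.sum_ite_mem, Finset.inter_eq_right.mpr hS, hsum]
    rw [this]
    simp
  · rintro ⟨ε, hε, hreach⟩
    rw [TI_iter n B n A _ le_rfl] at hreach
    have h2 : min (B + 1) (∑ i ∈ Finset.Icc 1 n, ε i * A i) = B :=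
      congrArg (fun c => c.2.1) hreach
    have hSum : ∑ i ∈ Finset.Icc 1 n, ε i * A i = B := by omega
    refine ⟨(Finset.Icc 1 n).filter (fun i => ε i = 1),
      Finset.filter_subset _ _, ?_⟩
    rw [Finset.sum_filter, ← hSum]
    apply Finset.sum_congr rfl
    intro i _
    have := hε i
    interval_cases (ε i) <;> simp
end

section
/- The encoding map c ↦ ⟨c⟩ = (i·2^{−p} + σ·2^{−q}, 1·β^{−n−1} + Σ_{j=i}^{n} ε_j*·β^{−j}) is injective on the set of configurations. -/
noncomputable section

def pp (n : ℕ) : ℕ := Nat.clog 2 (n + 2)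
def ww (B : ℕ) : ℕ := Nat.clog 2 (B + 2)
def qq (n B : ℕ) : ℕ := pp n + ww B + 1

def tp (n : ℕ) : ℝ := (2 : ℝ) ^ (-(pp n : ℤ))
def tp1 (n : ℕ) : ℝ := (2 : ℝ) ^ (-(pp n : ℤ) - 1)
def tq (n B : ℕ) : ℝ := (2 : ℝ) ^ (-(qq n B : ℤ))
def bI (k : ℤ) : ℝ := (5 : ℝ) ^ (-k)

def enc (n B : ℕ) (c : ℕ × ℕ × (ℕ → ℕ)) : ℝ × ℝ :=
  ((c.1 : ℝ) * tp n + (c.2.1 : ℝ) * tq n B,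
   bI ((n : ℤ) + 1) + ∑ j ∈ Finset.Icc c.1 n, ((3 * c.2.2 j + 1 : ℕ) : ℝ) * bI (j : ℤ))

def inR0 (n : ℕ) (x : ℝ × ℝ) : Prop :=
  0 ≤ x.1 ∧ x.1 ≤ tp1 n ∧ 0 ≤ x.2 ∧ x.2 ≤ 1

def inRi (n i : ℕ) (x : ℝ × ℝ) : Prop :=
  (i : ℝ) * tp n ≤ x.1 ∧ x.1 ≤ (i : ℝ) * tp n + tp1 n ∧ 0 ≤ x.2 ∧ x.2 ≤ bI ((i : ℤ) - 1)

def inRia (n i α : ℕ) (x : ℝ × ℝ) : Prop :=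
  (i : ℝ) * tp n ≤ x.1 ∧ x.1 ≤ (i : ℝ) * tp n + tp1 n ∧
    (α : ℝ) * bI (i : ℤ) ≤ x.2 ∧ x.2 ≤ ((α : ℝ) + 1) * bI (i : ℤ)

def in4lin (n B : ℕ) (A : ℕ → ℕ) (i : ℕ) (x : ℝ × ℝ) : Prop :=
  inRia n i 4 x ∧ x.1 ≤ (i : ℝ) * tp n + ((B : ℝ) + 1 - (A i : ℝ)) * tq n B

def in4sat (n B : ℕ) (A : ℕ → ℕ) (i : ℕ) (x : ℝ × ℝ) : Prop :=
  inRia n i 4 x ∧ (i : ℝ) * tp n + ((B : ℝ) + 1 - (A i : ℝ)) * tq n B ≤ x.1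

def in3lin (n B : ℕ) (A : ℕ → ℕ) (i : ℕ) (x : ℝ × ℝ) : Prop :=
  inRia n i 3 x ∧
    (x.2 * (5 : ℝ) ^ (i : ℤ) - 3) * (tp1 n - ((B : ℝ) + 1 - (A i : ℝ)) * tq n B) ≤
      tp1 n + (i : ℝ) * tp n - x.1

def in3sat (n B : ℕ) (A : ℕ → ℕ) (i : ℕ) (x : ℝ × ℝ) : Prop :=
  inRia n i 3 x ∧
    tp1 n + (i : ℝ) * tp n - x.1 ≤
      (x.2 * (5 : ℝ) ^ (i : ℤ) - 3) * (tp1 n - ((B : ℝ) + 1 - (A i : ℝ)) * tq n B)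

open scoped Classical in
def fI (n B : ℕ) (A : ℕ → ℕ) (x : ℝ × ℝ) : ℝ × ℝ :=
  if inR0 n x then (tp n, x.2)
  else if inRi n (n + 1) x then x
  else if _h : ∃ i, 1 ≤ i ∧ i ≤ n ∧ inRia n i 0 x then (x.1 + tp n, 0)
  else if h : ∃ i, 1 ≤ i ∧ i ≤ n ∧ inRia n i 1 x then
    (x.1 + tp n, x.2 - bI (h.choose : ℤ))
  else if h : ∃ i, 1 ≤ i ∧ i ≤ n ∧ inRia n i 2 x then
    (x.1 + tp n, 3 * bI (h.choose : ℤ) - x.2)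
  else if h : ∃ i, 1 ≤ i ∧ i ≤ n ∧ in3lin n B A i x then
    (x.1 + tp n + (A h.choose : ℝ) * tq n B * (x.2 * (5 : ℝ) ^ (h.choose : ℤ) - 3), 0)
  else if h : ∃ i, 1 ≤ i ∧ i ≤ n ∧ in3sat n B A i x then
    (((h.choose : ℝ) + 3 / 2) * tp n -
      (x.2 * (5 : ℝ) ^ (h.choose : ℤ) - 3) * (tp1 n - ((B : ℝ) + 1) * tq n B), 0)
  else if h : ∃ i, 1 ≤ i ∧ i ≤ n ∧ in4lin n B A i x then
    (x.1 + tp n + (A h.choose : ℝ) * tq n B, x.2 - 4 * bI (h.choose : ℤ))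
  else if h : ∃ i, 1 ≤ i ∧ i ≤ n ∧ in4sat n B A i x then
    (((h.choose : ℝ) + 1) * tp n + ((B : ℝ) + 1) * tq n B, x.2 - 4 * bI (h.choose : ℤ))
  else x

def inRfin (n B : ℕ) (x : ℝ × ℝ) : Prop :=
  ((n : ℝ) + 1) * tp n + (B : ℝ) * tq n B - (2 : ℝ) ^ (-(qq n B : ℤ) - 1) ≤ x.1 ∧
  x.1 ≤ ((n : ℝ) + 1) * tp n + (B : ℝ) * tq n B ∧
  bI ((n : ℤ) + 1) ≤ x.2 ∧ x.2 ≤ 2 * bI ((n : ℤ) + 1)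

end


-- auxiliary lemmas

private lemma key_div {a a' r r' K : ℕ} (hr : r < K) (hr' : r' < K)
    (h : a * K + r = a' * K + r') : a = a' ∧ r = r' := by
  rcases Nat.lt_trichotomy a a' with h1 | h1 | h1
  · exfalso
    have h2 : (a + 1) * K ≤ a' * K := Nat.mul_le_mul_right K h1
    rw [add_mul, one_mul] at h2
    omega
  · subst h1; omega
  · exfalso
    have h2 : (a' + 1) * K ≤ a * K := Nat.mul_le_mul_right K h1
    rw [add_mul, one_mul] at h2
    omega

private def Nsum (n : ℕ) (ε : ℕ → ℕ) (i : ℕ) : ℕ :=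
  ∑ j ∈ Finset.Icc i n, (3 * ε j + 1) * 5 ^ (n - j)

private lemma Nsum_split (n : ℕ) (ε : ℕ → ℕ) (i : ℕ) (hin : i ≤ n) :
    Nsum n ε i = (3 * ε i + 1) * 5 ^ (n - i) + Nsum n ε (i + 1) := by
  unfold Nsum
  rw [show Finset.Icc i n = insert i (Finset.Icc (i + 1) n) by
    ext x; simp [Finset.mem_Icc]; omega]
  rw [Finset.sum_insert (by simp)]

private lemma Nsum_bound (n : ℕ) (ε : ℕ → ℕ) (hε : ∀ j, ε j ≤ 1) :
    ∀ m i, n + 1 - i ≤ m → Nsum n ε i < 5 ^ (n + 1 - i) := by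
  intro m
  induction m with
  | zero =>
      intro i him
      have : n < i := by omega
      unfold Nsum
      rw [Finset.Icc_eq_empty (by omega)]
      simp
  | succ m ih =>
      intro i him
      by_cases hin : i ≤ n
      · rw [Nsum_split n ε i hin]
        have h1 : Nsum n ε (i + 1) < 5 ^ (n + 1 - (i + 1)) := ih (i + 1) (by omega)
        have h2 : n + 1 - (i + 1) = n - i := by omega
        rw [h2] at h1
        have h3 : 3 * ε i + 1 ≤ 4 := by have := hε i; omega
        have h4 : (3 * ε i + 1) * 5 ^ (n - i) ≤ 4 * 5 ^ (n - i) :=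
          Nat.mul_le_mul_right _ h3
        have h5 : n + 1 - i = (n - i) + 1 := by omega
        rw [h5, pow_succ]
        omega
      · unfold Nsum
        rw [Finset.Icc_eq_empty (by omega)]
        simp only [Finset.sum_empty]
        positivity

private lemma Nsum_inj (n : ℕ) (ε ε' : ℕ → ℕ) (hε : ∀ j, ε j ≤ 1)
    (hε' : ∀ j, ε' j ≤ 1) :
    ∀ m i, n + 1 - i ≤ m → Nsum n ε i = Nsum n ε' i →
      ∀ j, i ≤ j → j ≤ n → ε j = ε' j := by
  intro m
  induction m with
  | zero => intro i him hS j hij hjn; omega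
  | succ m ih =>
      intro i him hS j hij hjn
      have hin : i ≤ n := le_trans hij hjn
      rw [Nsum_split n ε i hin, Nsum_split n ε' i hin] at hS
      have hb : Nsum n ε (i + 1) < 5 ^ (n - i) := by
        have := Nsum_bound n ε hε m (i + 1) (by omega)
        rwa [show n + 1 - (i + 1) = n - i by omega] at this
      have hb' : Nsum n ε' (i + 1) < 5 ^ (n - i) := by
        have := Nsum_bound n ε' hε' m (i + 1) (by omega)
        rwa [show n + 1 - (i + 1) = n - i by omega] at this
      have hkey := key_div (K := 5 ^ (n - i)) hb hb' hS
      rcases Nat.eq_or_lt_of_le hij with heq | hlt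
      · subst heq; have := hkey.1; omega
      · exact ih (i + 1) (by omega) hkey.2 j hlt hjn

private lemma cast_Nsum (n B : ℕ) (ε : ℕ → ℕ) (i : ℕ) :
    ((Nsum n ε i : ℕ) : ℝ) =
      (∑ j ∈ Finset.Icc i n, ((3 * ε j + 1 : ℕ) : ℝ) * bI (j : ℤ)) * (5 : ℝ) ^ (n : ℕ) := by
  unfold Nsum
  rw [Finset.sum_mul]
  push_cast
  apply Finset.sum_congr rfl
  intro j hj
  have hjn : j ≤ n := (Finset.mem_Icc.mp hj).2
  rw [mul_assoc]
  congr 1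
  rw [bI, ← zpow_natCast (5 : ℝ) (n - j), ← zpow_natCast (5 : ℝ) n,
    show ((n - j : ℕ) : ℤ) = -(j : ℤ) + (n : ℤ) by omega,
    zpow_add₀ (by norm_num : (5 : ℝ) ≠ 0)]

theorem enc_injective (n B : ℕ)
    (i σ : ℕ) (ε : ℕ → ℕ) (i' σ' : ℕ) (ε' : ℕ → ℕ)
    (hi : 1 ≤ i) (hin : i ≤ n + 1) (hσ : σ ≤ B + 1) (hε : ∀ j, ε j ≤ 1)
    (hi' : 1 ≤ i') (hin' : i' ≤ n + 1) (hσ' : σ' ≤ B + 1) (hε' : ∀ j, ε' j ≤ 1)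
    (h : enc n B (i, σ, ε) = enc n B (i', σ', ε')) :
    i = i' ∧ σ = σ' ∧ ∀ j, i ≤ j → j ≤ n → ε j = ε' j := by
  simp only [enc, Prod.mk.injEq] at h
  obtain ⟨h1, h2⟩ := h
  -- first component
  have hK : (B + 1 : ℕ) < 2 ^ (ww B + 1) := by
    have h2w : B + 2 ≤ 2 ^ (ww B) := Nat.le_pow_clog (by norm_num) _
    have : (2 : ℕ) ^ (ww B) ≤ 2 ^ (ww B + 1) := Nat.pow_le_pow_right (by norm_num) (by omega)
    omega
  have hp : (2 : ℝ) ^ (-(pp n : ℤ)) * (2 : ℝ) ^ ((qq n B : ℕ) : ℤ) = (2 : ℝ) ^ (ww B + 1) := by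
    rw [← zpow_add₀ (by norm_num : (2 : ℝ) ≠ 0),
      show -(pp n : ℤ) + ((qq n B : ℕ) : ℤ) = ((ww B + 1 : ℕ) : ℤ) by
        simp [qq]; push_cast; ring, zpow_natCast]
  have hq : (2 : ℝ) ^ (-(qq n B : ℤ)) * (2 : ℝ) ^ ((qq n B : ℕ) : ℤ) = 1 := by
    rw [← zpow_add₀ (by norm_num : (2 : ℝ) ≠ 0)]; simp
  have hcast : ((i * 2 ^ (ww B + 1) + σ : ℕ) : ℝ) = ((i' * 2 ^ (ww B + 1) + σ' : ℕ) : ℝ) := by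
    push_cast
    calc (i : ℝ) * 2 ^ (ww B + 1) + σ
        = ((i : ℝ) * tp n + (σ : ℝ) * tq n B) * (2 : ℝ) ^ ((qq n B : ℕ) : ℤ) := by
          simp only [tp, tq]; rw [add_mul, mul_assoc, mul_assoc, hp, hq, mul_one]
      _ = ((i' : ℝ) * tp n + (σ' : ℝ) * tq n B) * (2 : ℝ) ^ ((qq n B : ℕ) : ℤ) := by rw [h1]
      _ = (i' : ℝ) * 2 ^ (ww B + 1) + σ' := by
          simp only [tp, tq]; rw [add_mul, mul_assoc, mul_assoc, hp, hq, mul_one]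
  have hnat : i * 2 ^ (ww B + 1) + σ = i' * 2 ^ (ww B + 1) + σ' := by exact_mod_cast hcast
  have hfirst := key_div (K := 2 ^ (ww B + 1)) (by omega) (by omega) hnat
  obtain ⟨hii, hσσ⟩ := hfirst
  refine ⟨hii, hσσ, ?_⟩
  -- second component
  subst hii
  have h2' : (∑ j ∈ Finset.Icc i n, ((3 * ε j + 1 : ℕ) : ℝ) * bI (j : ℤ))
      = ∑ j ∈ Finset.Icc i n, ((3 * ε' j + 1 : ℕ) : ℝ) * bI (j : ℤ) :=
    add_left_cancel h2
  have hNcast : ((Nsum n ε i : ℕ) : ℝ) = ((Nsum n ε' i : ℕ) : ℝ) := by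
    rw [cast_Nsum n B ε i, cast_Nsum n B ε' i, h2']
  have hN : Nsum n ε i = Nsum n ε' i := by exact_mod_cast hNcast
  exact Nsum_inj n ε ε' hε hε' (n + 1 - i) i le_rfl hN
end

section
/- For any configuration c = (i, σ, ε_i, ..., ε_n) with i ≤ n, the encoding ⟨c⟩ lies in the rectangle R_{i, ε_i*} = [i·2^{−p}, i·2^{−p} + 2^{−p−1}] × [ε_i*·β^{−i}, (ε_i* + 1)·β^{−i}]; if i = n+1, then ⟨c⟩ ∈ R_{n+1, 0*}. -/
lemma geom_eq (n : ℕ) : ∀ i, i ≤ n + 1 →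
    ∑ j ∈ Finset.Icc i n, (4 : ℝ) * (5 : ℝ) ^ (-(j : ℤ)) =
      (5 : ℝ) ^ (1 - (i : ℤ)) - (5 : ℝ) ^ (-(n : ℤ)) := by
  induction n with
  | zero =>
    intro i hi
    interval_cases i
    · norm_num
    · norm_num
  | succ n ih =>
    intro i hi
    rcases Nat.lt_or_ge i (n + 2) with h | h
    · have hin : i ≤ n + 1 := Nat.lt_succ_iff.mp h
      rw [Finset.sum_Icc_succ_top hin, ih i hin]
      have e1 : ((n : ℤ) + 1) = (((n + 1 : ℕ) : ℤ)) := by push_cast; ring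
      have : (5 : ℝ) ^ (-(n : ℤ)) = 5 * (5 : ℝ) ^ (-((n : ℤ) + 1)) := by
        rw [show (-(n:ℤ)) = (-((n:ℤ)+1)) + 1 by ring,
          zpow_add_one₀ (by norm_num : (5:ℝ) ≠ 0)]
        ring
      push_cast
      rw [this]
      ring
    · have : i = n + 2 := le_antisymm hi h
      subst this
      rw [Finset.Icc_eq_empty (by omega)]
      simp only [Finset.sum_empty]
      have : (1 : ℤ) - ((n : ℕ) + 2 : ℕ) = -((n : ℤ) + 1) := by push_cast; ring
      push_cast
      ring_nf

lemma sum_bound (ε : ℕ → ℕ) (hε : ∀ j, ε j ≤ 1) (i n : ℕ) (h : i ≤ n + 1) :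
    ∑ j ∈ Finset.Icc i n, ((3 * ε j + 1 : ℕ) : ℝ) * bI (j : ℤ) ≤
      (5 : ℝ) ^ (1 - (i : ℤ)) - (5 : ℝ) ^ (-(n : ℤ)) := by
  rw [← geom_eq n i h]
  apply Finset.sum_le_sum
  intro j _
  unfold bI
  have h1 : ((3 * ε j + 1 : ℕ) : ℝ) ≤ 4 := by
    have := hε j
    push_cast
    have : (ε j : ℝ) ≤ 1 := by exact_mod_cast this
    linarith
  have h2 : (0 : ℝ) ≤ (5 : ℝ) ^ (-(j : ℤ)) := by positivity
  nlinarith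

lemma sq_bound (n B σ : ℕ) (hσ : σ ≤ B + 1) : (σ : ℝ) * tq n B ≤ tp1 n := by
  have hle : B + 2 ≤ 2 ^ ww B := Nat.le_pow_clog one_lt_two _
  have hσ2 : σ ≤ 2 ^ ww B := by omega
  have hσr : (σ : ℝ) ≤ (2 : ℝ) ^ (ww B : ℤ) := by
    have : ((σ : ℕ) : ℝ) ≤ ((2 ^ ww B : ℕ) : ℝ) := by exact_mod_cast hσ2
    simpa [zpow_natCast] using this
  unfold tq tp1 qq
  have hpos : (0 : ℝ) < (2 : ℝ) ^ (-(pp n + ww B + 1 : ℤ)) := by positivity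
  calc (σ : ℝ) * (2 : ℝ) ^ (-((pp n + ww B + 1 : ℕ) : ℤ))
      ≤ (2 : ℝ) ^ (ww B : ℤ) * (2 : ℝ) ^ (-((pp n + ww B + 1 : ℕ) : ℤ)) := by
        apply mul_le_mul_of_nonneg_right hσr (by positivity)
    _ = (2 : ℝ) ^ (-(pp n : ℤ) - 1) := by
        rw [← zpow_add₀ (by norm_num : (2:ℝ) ≠ 0)]
        congr 1
        push_cast
        ring

theorem enc_mem_region (n B : ℕ) (i σ : ℕ) (ε : ℕ → ℕ)
    (hi : 1 ≤ i) (hin : i ≤ n + 1) (hσ : σ ≤ B + 1) (hε : ∀ j, ε j ≤ 1) :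
    (i ≤ n → inRia n i (3 * ε i + 1) (enc n B (i, σ, ε))) ∧
    (i = n + 1 → inRia n (n + 1) 1 (enc n B (i, σ, ε))) := by
  have hx1l : (i : ℝ) * tp n ≤ (enc n B (i, σ, ε)).1 := by
    simp only [enc]
    have : (0:ℝ) ≤ (σ : ℝ) * tq n B := by unfold tq; positivity
    linarith
  have hx1u : (enc n B (i, σ, ε)).1 ≤ (i : ℝ) * tp n + tp1 n := by
    simp only [enc]
    have := sq_bound n B σ hσ
    linarith
  constructor
  · intro hle
    have hsplit : ∑ j ∈ Finset.Icc i n, ((3 * ε j + 1 : ℕ) : ℝ) * bI (j : ℤ)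
        = ((3 * ε i + 1 : ℕ) : ℝ) * bI (i : ℤ)
          + ∑ j ∈ Finset.Icc (i+1) n, ((3 * ε j + 1 : ℕ) : ℝ) * bI (j : ℤ) := by
      rw [← Finset.Ioc_insert_left hle, Finset.sum_insert (by simp), ← Finset.Icc_add_one_left_eq_Ioc]
    have hS : ∑ j ∈ Finset.Icc (i+1) n, ((3 * ε j + 1 : ℕ) : ℝ) * bI (j : ℤ)
        ≤ (5 : ℝ) ^ (-(i : ℤ)) - (5 : ℝ) ^ (-(n : ℤ)) := by
      have := sum_bound ε hε (i+1) n (by omega)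
      have h5i : (5:ℝ) ^ (1 - ((i+1 : ℕ) : ℤ)) = (5:ℝ) ^ (-(i : ℤ)) := by
        congr 1; push_cast; ring
      rw [h5i] at this
      exact this
    have hSnn : (0:ℝ) ≤ ∑ j ∈ Finset.Icc (i+1) n, ((3 * ε j + 1 : ℕ) : ℝ) * bI (j : ℤ) := by
      apply Finset.sum_nonneg
      intro j _
      have : (0:ℝ) ≤ bI (j : ℤ) := by unfold bI; positivity
      positivity
    have hbn : bI ((n : ℤ) + 1) ≤ (5 : ℝ) ^ (-(n : ℤ)) := by
      unfold bI
      rw [neg_add, zpow_add₀ (by norm_num : (5:ℝ) ≠ 0)]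
      have h1 : (0:ℝ) < (5:ℝ) ^ (-(n : ℤ)) := by positivity
      have h2 : (5:ℝ) ^ (-1 : ℤ) = 1/5 := by norm_num
      rw [h2]; nlinarith
    have hbnn : (0:ℝ) ≤ bI ((n : ℤ) + 1) := by unfold bI; positivity
    refine ⟨hx1l, hx1u, ?_, ?_⟩
    · simp only [enc, hsplit]
      linarith
    · simp only [enc, hsplit]
      have hbi : bI (i : ℤ) = (5 : ℝ) ^ (-(i : ℤ)) := rfl
      rw [← hbi] at hS
      linarith
  · intro hi1
    subst hi1
    have hempty : Finset.Icc (n+1) n = ∅ := Finset.Icc_eq_empty (by omega)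
    refine ⟨hx1l, hx1u, ?_, ?_⟩
    · simp only [enc, hempty, Finset.sum_empty]
      have : (0:ℝ) ≤ bI ((n+1 : ℕ) : ℤ) := by unfold bI; positivity
      have he : ((n+1 : ℕ) : ℤ) = (n : ℤ) + 1 := by push_cast; ring
      rw [he] at this
      push_cast
      linarith
    · simp only [enc, hempty, Finset.sum_empty]
      have : (0:ℝ) ≤ bI ((n+1 : ℕ) : ℤ) := by unfold bI; positivity
      have he : ((n+1 : ℕ) : ℤ) = (n : ℤ) + 1 := by push_cast; ring
      rw [he] at this
      push_cast
      linarith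
end

section
/- The piecewise affine map f_I correctly simulates the transition function: for every configuration c of the SUBSET-SUM instance I, ⟨T_I(c)⟩ = f_I(⟨c⟩). -/
lemma tp_pos (n : ℕ) : 0 < tp n := by unfold tp; positivity
lemma tq_pos (n B : ℕ) : 0 < tq n B := by unfold tq; positivity
lemma tp1_pos (n : ℕ) : 0 < tp1 n := by unfold tp1; positivity

lemma tp1_eq (n : ℕ) : tp1 n = tp n / 2 := by
  unfold tp1 tp
  rw [zpow_sub₀ (by norm_num : (2:ℝ) ≠ 0)]
  norm_num

lemma tp1_lt_tp (n : ℕ) : tp1 n < tp n := by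
  have := tp_pos n; rw [tp1_eq]; linarith

lemma tp1_tq (n B : ℕ) : tp1 n = 2 ^ (ww B) * tq n B := by
  unfold tp1 tq qq
  rw [← zpow_natCast (2:ℝ) (ww B), ← zpow_add₀ (by norm_num : (2:ℝ) ≠ 0)]
  congr 1
  push_cast
  ring

lemma Bq_lt (n B : ℕ) : ((B:ℝ) + 1) * tq n B < tp1 n := by
  rw [tp1_tq n B]
  have h2 : (B:ℝ) + 2 ≤ 2 ^ (ww B) := by
    have := Nat.le_pow_clog (by norm_num : 1 < 2) (B + 2)
    exact_mod_cast this
  have hq := tq_pos n B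
  nlinarith

lemma bI_pos (k : ℤ) : 0 < bI k := by unfold bI; positivity

lemma bI_sub_one (k : ℤ) : bI (k - 1) = 5 * bI k := by
  unfold bI
  rw [show -(k-1) = 1 + -k by ring, zpow_add₀ (by norm_num : (5:ℝ) ≠ 0), zpow_one]

lemma rest_pos (n k : ℕ) (ε : ℕ → ℕ) :
    0 < bI ((n:ℤ)+1) + ∑ j ∈ Finset.Icc k n, ((3 * ε j + 1 : ℕ) : ℝ) * bI (j:ℤ) :=
  add_pos_of_pos_of_nonneg (bI_pos _)
    (Finset.sum_nonneg fun j _ => mul_nonneg (Nat.cast_nonneg _) (bI_pos _).le)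

lemma rest_lt (n : ℕ) (ε : ℕ → ℕ) (hε : ∀ j, ε j ≤ 1) :
    ∀ d k, k + d = n + 1 →
      bI ((n:ℤ)+1) + ∑ j ∈ Finset.Icc k n, ((3 * ε j + 1 : ℕ) : ℝ) * bI (j:ℤ) < bI ((k:ℤ)-1) := by
  intro d
  induction d with
  | zero =>
    intro k hk
    have hk' : k = n + 1 := by omega
    subst hk'
    rw [Finset.Icc_eq_empty (by omega), Finset.sum_empty, add_zero]
    rw [show ((n+1:ℕ):ℤ) - 1 = ((n:ℤ)+1) - 1 from by push_cast; ring, bI_sub_one]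
    nlinarith [bI_pos ((n:ℤ)+1)]
  | succ d ih =>
    intro k hk
    have hkn : k ≤ n := by omega
    rw [← Finset.Ioc_insert_left hkn, Finset.sum_insert (by simp),
      ← Finset.Icc_add_one_left_eq_Ioc]
    have h1 := ih (k+1) (by omega)
    rw [show ((k+1:ℕ):ℤ) - 1 = (k:ℤ) from by push_cast; ring] at h1
    have hterm : ((3 * ε k + 1 : ℕ):ℝ) ≤ 4 := by
      have := hε k
      have : 3 * ε k + 1 ≤ 4 := by omega
      exact_mod_cast this
    rw [bI_sub_one]
    have hb := bI_pos (k:ℤ)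
    nlinarith [Nat.cast_nonneg (3 * ε k + 1) (α := ℝ)]

lemma x_uniq (n : ℕ) (i i' : ℕ) (x : ℝ) (h1 : (i:ℝ) * tp n ≤ x) (h2 : x ≤ (i:ℝ) * tp n + tp1 n)
    (h1' : (i':ℝ) * tp n ≤ x) (h2' : x ≤ (i':ℝ) * tp n + tp1 n) : i' = i := by
  have hp := tp_pos n
  have h := tp1_lt_tp n
  have a1 : (i:ℝ) * tp n < ((i':ℝ) + 1) * tp n := by nlinarith
  have a2 : (i':ℝ) * tp n < ((i:ℝ) + 1) * tp n := by nlinarith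
  have b1 : (i:ℝ) < (i':ℝ) + 1 := lt_of_mul_lt_mul_right a1 hp.le
  have b2 : (i':ℝ) < (i:ℝ) + 1 := lt_of_mul_lt_mul_right a2 hp.le
  have c1 : i < i' + 1 := by exact_mod_cast b1
  have c2 : i' < i + 1 := by exact_mod_cast b2
  omega

theorem simulation_correct (n B : ℕ) (A : ℕ → ℕ) (hA : ∀ j, A j ≤ B)
    (c : ℕ × ℕ × (ℕ → ℕ)) (hi : 1 ≤ c.1) (hin : c.1 ≤ n + 1)
    (hσ : c.2.1 ≤ B + 1) (hε : ∀ j, c.2.2 j ≤ 1) :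
    enc n B (TI n B A c) = fI n B A (enc n B c) := by
  obtain ⟨i, σ, ε⟩ := c
  dsimp only at hi hin hσ hε
  obtain ⟨X, hX⟩ : ∃ X : ℝ, (i:ℝ) * tp n + (σ:ℝ) * tq n B = X := ⟨_, rfl⟩
  obtain ⟨Y, hY⟩ : ∃ Y : ℝ,
      bI ((n:ℤ)+1) + ∑ j ∈ Finset.Icc i n, ((3 * ε j + 1 : ℕ):ℝ) * bI (j:ℤ) = Y := ⟨_, rfl⟩
  have hencc : enc n B (i, σ, ε) = (X, Y) := by rw [← hX, ← hY]; rfl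
  have hp := tp_pos n
  have hp1 := tp1_pos n
  have hq := tq_pos n B
  have hBq := Bq_lt n B
  have h12 := tp1_lt_tp n
  have hσR : (σ:ℝ) ≤ (B:ℝ) + 1 := by exact_mod_cast hσ
  have hiR : (1:ℝ) ≤ (i:ℝ) := by exact_mod_cast hi
  have hxl : (i:ℝ) * tp n ≤ X := by rw [← hX]; nlinarith
  have hxu : X ≤ (i:ℝ) * tp n + tp1 n := by rw [← hX]; nlinarith
  have hYpos : 0 < Y := hY ▸ rest_pos n i ε
  have hnR0 : ¬ inR0 n (X, Y) := by
    rintro ⟨_, h, _, _⟩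
    dsimp only at h
    nlinarith
  have huniq : ∀ i' α, inRia n i' α (X, Y) → i' = i := by
    intro i' α h
    simp only [inRia] at h
    exact x_uniq n i i' X hxl hxu h.1 h.2.1
  rw [hencc]
  by_cases hcase : i = n + 1
  · subst hcase
    have hTI : TI n B A (n+1, σ, ε) = (n+1, σ, ε) := by simp [TI]
    rw [hTI, hencc]
    have hYub := rest_lt n ε hε 0 (n+1) (by omega)
    rw [hY] at hYub
    have hRn : inRi n (n+1) (X, Y) := ⟨hxl, hxu, hYpos.le, hYub.le⟩
    simp only [fI]
    rw [if_neg hnR0, if_pos hRn]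
  · have hin' : i ≤ n := by omega
    have hTI : TI n B A (i, σ, ε) = (i+1, min (B+1) (σ + ε i * A i), ε) := by
      simp [TI, hcase]
    have hrest := rest_lt n ε hε (n - i) (i+1) (by omega)
    rw [show ((i+1:ℕ):ℤ) - 1 = (i:ℤ) from by push_cast; ring] at hrest
    obtain ⟨R, hR⟩ : ∃ R : ℝ,
        bI ((n:ℤ)+1) + ∑ j ∈ Finset.Icc (i+1) n, ((3 * ε j + 1 : ℕ):ℝ) * bI (j:ℤ) = R := ⟨_, rfl⟩
    rw [hR] at hrest
    have hRpos : 0 < R := hR ▸ rest_pos n (i+1) ε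
    have hsplit : Y = ((3 * ε i + 1 : ℕ):ℝ) * bI (i:ℤ) + R := by
      rw [← hY, ← hR, ← Finset.Ioc_insert_left hin', Finset.sum_insert (by simp),
        ← Finset.Icc_add_one_left_eq_Ioc]
      ring
    have hbi := bI_pos (i:ℤ)
    have hxlt : X < ((n:ℝ)+1) * tp n := by
      have h1 : (i:ℝ) ≤ (n:ℝ) := by exact_mod_cast hin'
      nlinarith
    have hnRn1 : ¬ inRi n (n+1) (X, Y) := by
      rintro ⟨h1, -, -, -⟩
      dsimp only at h1
      push_cast at h1
      linarith
    have heps : ε i = 0 ∨ ε i = 1 := by have := hε i; omega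
    rcases heps with he | he
    · -- ε i = 0 : region (i,1)
      rw [he] at hsplit
      norm_num at hsplit
      have hYlb : bI (i:ℤ) < Y := by rw [hsplit]; linarith
      have hYub : Y < 2 * bI (i:ℤ) := by rw [hsplit]; linarith
      have hn0 : ¬ ∃ i', 1 ≤ i' ∧ i' ≤ n ∧ inRia n i' 0 (X, Y) := by
        rintro ⟨i', -, -, hr⟩
        rw [huniq i' 0 hr] at hr
        simp only [inRia] at hr
        push_cast at hr
        linarith [hr.2.2.2]
      have hex1 : ∃ i', 1 ≤ i' ∧ i' ≤ n ∧ inRia n i' 1 (X, Y) := by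
        refine ⟨i, hi, hin', hxl, hxu, ?_, ?_⟩ <;> push_cast <;> linarith
      simp only [fI]
      rw [if_neg hnR0, if_neg hnRn1, dif_neg hn0, dif_pos hex1]
      rw [huniq _ 1 hex1.choose_spec.2.2]
      rw [hTI, he]
      rw [show min (B+1) (σ + 0 * A i) = σ by omega]
      simp only [enc, Prod.mk.injEq]
      constructor
      · rw [← hX]; push_cast; ring
      · rw [hR]; linarith
    · -- ε i = 1 : region (i,4)
      rw [he] at hsplit
      norm_num at hsplit
      have hYlb : 4 * bI (i:ℤ) < Y := by rw [hsplit]; linarith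
      have hYub : Y < 5 * bI (i:ℤ) := by rw [hsplit]; linarith
      have hn0 : ¬ ∃ i', 1 ≤ i' ∧ i' ≤ n ∧ inRia n i' 0 (X, Y) := by
        rintro ⟨i', -, -, hr⟩
        rw [huniq i' 0 hr] at hr
        simp only [inRia] at hr; push_cast at hr; linarith [hr.2.2.2]
      have hn1 : ¬ ∃ i', 1 ≤ i' ∧ i' ≤ n ∧ inRia n i' 1 (X, Y) := by
        rintro ⟨i', -, -, hr⟩
        rw [huniq i' 1 hr] at hr
        simp only [inRia] at hr; push_cast at hr; linarith [hr.2.2.2]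
      have hn2 : ¬ ∃ i', 1 ≤ i' ∧ i' ≤ n ∧ inRia n i' 2 (X, Y) := by
        rintro ⟨i', -, -, hr⟩
        rw [huniq i' 2 hr] at hr
        simp only [inRia] at hr; push_cast at hr; linarith [hr.2.2.2]
      have hn3l : ¬ ∃ i', 1 ≤ i' ∧ i' ≤ n ∧ in3lin n B A i' (X, Y) := by
        rintro ⟨i', -, -, hr, -⟩
        rw [huniq i' 3 hr] at hr
        simp only [inRia] at hr; push_cast at hr; linarith [hr.2.2.2]
      have hn3s : ¬ ∃ i', 1 ≤ i' ∧ i' ≤ n ∧ in3sat n B A i' (X, Y) := by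
        rintro ⟨i', -, -, hr, -⟩
        rw [huniq i' 3 hr] at hr
        simp only [inRia] at hr; push_cast at hr; linarith [hr.2.2.2]
      have hAiR : (A i : ℝ) ≤ (B:ℝ) := by exact_mod_cast hA i
      have hria4 : inRia n i 4 (X, Y) := by
        refine ⟨hxl, hxu, ?_, ?_⟩ <;> push_cast <;> linarith
      by_cases hσA : σ + A i ≤ B + 1
      · -- linear branch
        have hσAR : (σ:ℝ) + (A i:ℝ) ≤ (B:ℝ) + 1 := by exact_mod_cast hσA
        have hex4 : ∃ i', 1 ≤ i' ∧ i' ≤ n ∧ in4lin n B A i' (X, Y) := by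
          refine ⟨i, hi, hin', hria4, ?_⟩
          dsimp only
          have : (σ:ℝ) * tq n B ≤ ((B:ℝ) + 1 - (A i:ℝ)) * tq n B := by
            apply mul_le_mul_of_nonneg_right _ hq.le
            linarith
          rw [← hX]; linarith
        simp only [fI]
        rw [if_neg hnR0, if_neg hnRn1, dif_neg hn0, dif_neg hn1, dif_neg hn2,
          dif_neg hn3l, dif_neg hn3s, dif_pos hex4]
        rw [huniq _ 4 hex4.choose_spec.2.2.1]
        rw [hTI, he]
        rw [show min (B+1) (σ + 1 * A i) = σ + A i by omega]
        simp only [enc, Prod.mk.injEq]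
        constructor
        · rw [← hX]; push_cast; ring
        · rw [hR]; linarith
      · -- saturated branch
        have hσAR : (B:ℝ) + 1 ≤ (σ:ℝ) + (A i:ℝ) := by
          have : B + 1 ≤ σ + A i := by omega
          exact_mod_cast this
        have hn4l : ¬ ∃ i', 1 ≤ i' ∧ i' ≤ n ∧ in4lin n B A i' (X, Y) := by
          rintro ⟨i', -, -, hr, hb⟩
          rw [huniq i' 4 hr] at hb
          dsimp only at hb
          rw [← hX] at hb
          have h2 : (σ:ℝ) * tq n B ≤ ((B:ℝ) + 1 - (A i:ℝ)) * tq n B := by linarith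
          have h3 : (σ:ℝ) ≤ (B:ℝ) + 1 - (A i:ℝ) := le_of_mul_le_mul_right h2 hq
          have h4 : σ + A i ≤ B + 1 := by
            have : (σ:ℝ) + (A i:ℝ) ≤ (B:ℝ) + 1 := by linarith
            exact_mod_cast this
          omega
        have hex4 : ∃ i', 1 ≤ i' ∧ i' ≤ n ∧ in4sat n B A i' (X, Y) := by
          refine ⟨i, hi, hin', hria4, ?_⟩
          dsimp only
          have : ((B:ℝ) + 1 - (A i:ℝ)) * tq n B ≤ (σ:ℝ) * tq n B := by
            apply mul_le_mul_of_nonneg_right _ hq.le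
            linarith
          rw [← hX]; linarith
        simp only [fI]
        rw [if_neg hnR0, if_neg hnRn1, dif_neg hn0, dif_neg hn1, dif_neg hn2,
          dif_neg hn3l, dif_neg hn3s, dif_neg hn4l, dif_pos hex4]
        rw [huniq _ 4 hex4.choose_spec.2.2.1]
        rw [hTI, he]
        rw [show min (B+1) (σ + 1 * A i) = B + 1 by omega]
        simp only [enc, Prod.mk.injEq]
        constructor
        · push_cast; ring
        · rw [hR]; linarith
end

section
/- The extended piecewise affine map f_I is continuous on each R_i: on every border between adjacent subregions of R_i (R_{i,0}∩R_{i,0*}, R_{i,0*}∩R_{i,2}, R_{i,2}∩R_{i,3}^{lin}, R_{i,3}^{lin}∩R_{i,1*}^{lin}, R_{i,3}^{lin}∩R_{i,3}^{sat}, R_{i,3}^{sat}∩R_{i,1*}^{sat}, R_{i,1*}^{lin}∩R_{i,1*}^{sat}), the two affine formulas defining f_I agree. -/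
theorem simulation_continuous_on_borders (n B : ℕ) (A : ℕ → ℕ) (hA : ∀ j, A j ≤ B)
    (i : ℕ) (hi : 1 ≤ i) (hin : i ≤ n) (a b : ℝ)
    (ha : (i : ℝ) * tp n ≤ a ∧ a ≤ (i : ℝ) * tp n + tp1 n) :
    -- border R_{i,0} ∩ R_{i,0*}
    (b = bI (i : ℤ) →
      ((a + tp n, (0 : ℝ)) : ℝ × ℝ) = (a + tp n, b - bI (i : ℤ))) ∧
    -- border R_{i,0*} ∩ R_{i,2}
    (b = 2 * bI (i : ℤ) →
      ((a + tp n, b - bI (i : ℤ)) : ℝ × ℝ) = (a + tp n, 3 * bI (i : ℤ) - b)) ∧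
    -- border R_{i,2} ∩ R_{i,3}^{lin}
    (b = 3 * bI (i : ℤ) →
      ((a + tp n, 3 * bI (i : ℤ) - b) : ℝ × ℝ) =
        (a + tp n + (A i : ℝ) * tq n B * (b * (5 : ℝ) ^ (i : ℤ) - 3), 0)) ∧
    -- border R_{i,3}^{lin} ∩ R_{i,1*}^{lin}
    (b = 4 * bI (i : ℤ) →
      ((a + tp n + (A i : ℝ) * tq n B * (b * (5 : ℝ) ^ (i : ℤ) - 3), (0 : ℝ)) : ℝ × ℝ) =
        (a + tp n + (A i : ℝ) * tq n B, b - 4 * bI (i : ℤ))) ∧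
    -- border R_{i,3}^{lin} ∩ R_{i,3}^{sat}
    ((b * (5 : ℝ) ^ (i : ℤ) - 3) * (tp1 n - ((B : ℝ) + 1 - (A i : ℝ)) * tq n B) =
        tp1 n + (i : ℝ) * tp n - a →
      ((a + tp n + (A i : ℝ) * tq n B * (b * (5 : ℝ) ^ (i : ℤ) - 3), (0 : ℝ)) : ℝ × ℝ) =
        (((i : ℝ) + 3 / 2) * tp n -
          (b * (5 : ℝ) ^ (i : ℤ) - 3) * (tp1 n - ((B : ℝ) + 1) * tq n B), 0)) ∧
    -- border R_{i,3}^{sat} ∩ R_{i,1*}^{sat}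
    (b = 4 * bI (i : ℤ) →
      ((((i : ℝ) + 3 / 2) * tp n -
          (b * (5 : ℝ) ^ (i : ℤ) - 3) * (tp1 n - ((B : ℝ) + 1) * tq n B), (0 : ℝ)) : ℝ × ℝ) =
        (((i : ℝ) + 1) * tp n + ((B : ℝ) + 1) * tq n B, b - 4 * bI (i : ℤ))) ∧
    -- border R_{i,1*}^{lin} ∩ R_{i,1*}^{sat}
    (a = (i : ℝ) * tp n + ((B : ℝ) + 1 - (A i : ℝ)) * tq n B →
      ((a + tp n + (A i : ℝ) * tq n B, b - 4 * bI (i : ℤ)) : ℝ × ℝ) =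
        (((i : ℝ) + 1) * tp n + ((B : ℝ) + 1) * tq n B, b - 4 * bI (i : ℤ))) := by
  have hb5 : bI (i : ℤ) * (5 : ℝ) ^ (i : ℤ) = 1 := by
    simp [bI, ← zpow_add₀ (by norm_num : (5:ℝ) ≠ 0)]
  have htp1 : tp1 n = tp n / 2 := by
    simp [tp1, tp, sub_eq_add_neg, zpow_add₀ (by norm_num : (2:ℝ) ≠ 0)]
    ring
  refine ⟨?_, ?_, ?_, ?_, ?_, ?_, ?_⟩ <;> intro hb <;>
    simp only [Prod.mk.injEq] <;> constructor
  · trivial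
  · subst hb; linarith
  · trivial
  · subst hb; linarith
  · subst hb; linear_combination (-(3:ℝ) * (A i : ℝ) * tq n B) * hb5
  · subst hb; linarith
  · subst hb; linear_combination ((4:ℝ) * (A i : ℝ) * tq n B) * hb5
  · subst hb; linarith
  · linear_combination hb + htp1
  · trivial
  · subst hb
    linear_combination (-(4:ℝ) * (tp1 n - ((B:ℝ) + 1) * tq n B)) * hb5 - htp1
  · subst hb; linarith
  · rw [hb]; ring
  · trivial
end

section
/- If an encoding ⟨c⟩ of a configuration c lies in the final region R_fin = [(n+1)·2^{−p}+B·2^{−q}−2^{−q−1}, (n+1)·2^{−p}+B·2^{−q}] × [β^{−n−1}, 2β^{−n−1}], then c = (n+1, B). -/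
theorem final_region_accepting (n B : ℕ) (i σ : ℕ) (ε : ℕ → ℕ)
    (hin : i ≤ n + 1) (hσ : σ ≤ B + 1) (hε : ∀ j, ε j ≤ 1)
    (h : inRfin n B (enc n B (i, σ, ε))) : i = n + 1 ∧ σ = B := by
  obtain ⟨h1, h2, h3, h4⟩ := h
  simp only [enc] at h1 h2 h3 h4
  have hb : (0:ℝ) < bI ((n:ℤ)+1) := by unfold bI; positivity
  have hi : i = n + 1 := by
    by_contra hne
    have hile : i ≤ n := by omega
    have hpos : ∀ j ∈ Finset.Icc i n, (0:ℝ) ≤ ((3 * ε j + 1 : ℕ) : ℝ) * bI (j : ℤ) := by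
      intro j _
      have hbj : (0:ℝ) < bI (j:ℤ) := by unfold bI; positivity
      positivity
    have hmem : n ∈ Finset.Icc i n := Finset.mem_Icc.mpr ⟨hile, le_rfl⟩
    have hsingle : ((3 * ε n + 1 : ℕ) : ℝ) * bI (n : ℤ) ≤
        ∑ j ∈ Finset.Icc i n, ((3 * ε j + 1 : ℕ) : ℝ) * bI (j : ℤ) :=
      Finset.single_le_sum hpos hmem
    have hbn : (0:ℝ) < bI (n:ℤ) := by unfold bI; positivity
    have h1le : (1:ℝ) ≤ ((3 * ε n + 1 : ℕ) : ℝ) := by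
      have : 1 ≤ 3 * ε n + 1 := by omega
      exact_mod_cast this
    have hterm : bI (n:ℤ) ≤ ((3 * ε n + 1 : ℕ) : ℝ) * bI (n : ℤ) := by
      nlinarith
    have hrel : bI (n:ℤ) = 5 * bI ((n:ℤ)+1) := by
      unfold bI
      rw [neg_add, zpow_add₀ (by norm_num : (5:ℝ) ≠ 0)]
      norm_num
      ring
    nlinarith [h4]
  subst hi
  have hempty : Finset.Icc (n+1) n = ∅ := by
    apply Finset.Icc_eq_empty; omega
  have htq : (0:ℝ) < tq n B := by unfold tq; positivity
  have hhalf : (2:ℝ) ^ (-(qq n B : ℤ) - 1) = tq n B / 2 := by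
    unfold tq
    rw [zpow_sub₀ (by norm_num : (2:ℝ) ≠ 0)]
    norm_num
  rw [hhalf] at h1
  push_cast at h1 h2
  have hub : (σ:ℝ) ≤ B := by
    have := h2
    nlinarith
  have hlb : (B:ℝ) - 1/2 ≤ (σ:ℝ) := by nlinarith
  have : σ ≤ B ∧ B ≤ σ := by
    constructor
    · exact_mod_cast hub
    · by_contra hc
      push_neg at hc
      have : (σ:ℝ) ≤ (B:ℝ) - 1 := by
        have : σ + 1 ≤ B := hc
        have := (Nat.cast_le (α := ℝ)).mpr this
        push_cast at this
        linarith
      linarith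
  exact ⟨rfl, by omega⟩
end

section
/- Size of iterates of a piecewise affine function grows linearly: if f ∈ PAF_d has rational coefficients, p regions, and size s(f), then for all t ∈ ℕ, s(f^[t]) ≤ (d+1)²·s(f)·p·t + (t−1)·⌈log₂(d+1)⌉, where all rationals may be taken with common denominator. -/
/-!
Write each piece over a common denominator: if its entries have size `≤ s`, the product `D` of
its `(d+1)²` entry denominators and the numerators `D·x` are all `< 2^((d+1)² s)`. A product of
`t` such matrices is `(D₁⋯D_t)⁻¹` times a product of integer matrices, and each multiplication of
integer matrices multiplies the entry bounds and adds a factor `d+1 ≤ 2^⌈log₂(d+1)⌉`. Reducing the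
resulting fractions only shrinks numerators and denominators.
-/

/-- Bit-size of a rational: max of the bit-lengths of numerator and denominator. -/
def qsize (x : ℚ) : ℕ := max x.num.natAbs.size x.den.size

lemma natAbs_num_lt_two_pow_of_qsize_le {x : ℚ} {s : ℕ} (hx : qsize x ≤ s) :
    x.num.natAbs < 2 ^ s :=
  Nat.size_le.mp ((le_max_left _ _).trans hx)

lemma den_lt_two_pow_of_qsize_le {x : ℚ} {s : ℕ} (hx : qsize x ≤ s) : x.den < 2 ^ s :=
  Nat.size_le.mp ((le_max_right _ _).trans hx)

lemma qsize_le_of_eq_div {x : ℚ} {z : ℤ} {D m : ℕ} (hD : 0 < D) (hz : z.natAbs < 2 ^ m)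
    (hDm : D < 2 ^ m) (hx : x = z / D) : qsize x ≤ m := by
  have hD' : (D : ℤ) ≠ 0 := by exact_mod_cast hD.ne'
  have hx' : x = Rat.divInt z D := by rw [hx, Rat.divInt_eq_div, Int.cast_natCast]
  have hnum : x.num.natAbs ≤ z.natAbs := by
    rcases eq_or_ne z 0 with rfl | hz0
    · simp [hx']
    · exact Nat.le_of_dvd (Int.natAbs_pos.mpr hz0)
        (Int.natAbs_dvd_natAbs.mpr (hx' ▸ Rat.num_dvd z hD'))
  have hden : x.den ≤ D := Nat.le_of_dvd hD (by exact_mod_cast hx' ▸ Rat.den_dvd z D)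
  exact max_le (Nat.size_le.mpr (hnum.trans_lt hz)) (Nat.size_le.mpr (hden.trans_lt hDm))

lemma Finset.prod_lt_pow_card_of_lt {α : Type*} {s : Finset α} {f : α → ℕ} {B : ℕ}
    (hs : s.Nonempty) (hf : ∀ x ∈ s, f x < B) : ∏ x ∈ s, f x < B ^ s.card :=
  calc ∏ x ∈ s, f x ≤ (B - 1) ^ s.card := Finset.prod_le_pow_card _ _ _ fun x hx => by
        have := hf x hx; omega
    _ < B ^ s.card := by
      have := hf _ hs.choose_spec
      exact Nat.pow_lt_pow_left (by omega) hs.card_pos.ne'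

namespace Matrix

variable {ι : Type*}

lemma natAbs_mul_apply_lt [Fintype ι] [Nonempty ι] {A B : Matrix ι ι ℤ} {a b : ℕ}
    (hA : ∀ i j, (A i j).natAbs < a) (hB : ∀ i j, (B i j).natAbs < b) (i j : ι) :
    ((A * B) i j).natAbs < Fintype.card ι * (a * b) :=
  calc ((A * B) i j).natAbs ≤ ∑ k, (A i k * B k j).natAbs := Int.natAbs_sum_le _ _
    _ < ∑ _k : ι, a * b := Finset.sum_lt_sum_of_nonempty Finset.univ_nonempty fun k _ => by
        rw [Int.natAbs_mul]; exact Nat.mul_lt_mul'' (hA i k) (hB k j)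
    _ = Fintype.card ι * (a * b) := by simp

def HasBoundedIntRep (X : Matrix ι ι ℚ) (a b : ℕ) : Prop :=
  ∃ (N : Matrix ι ι ℤ) (D : ℕ), 0 < D ∧ D < b ∧ (∀ i j, (N i j).natAbs < a) ∧
    X = (D : ℚ)⁻¹ • N.map (Int.castRingHom ℚ)

namespace HasBoundedIntRep

variable {X Y : Matrix ι ι ℚ} {a a' b b' : ℕ}

lemma mono (hX : X.HasBoundedIntRep a b) (ha : a ≤ a') (hb : b ≤ b') :
    X.HasBoundedIntRep a' b' :=
  let ⟨N, D, hD, hDb, hN, hXN⟩ := hX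
  ⟨N, D, hD, hDb.trans_le hb, fun i j => (hN i j).trans_le ha, hXN⟩

lemma qsize_le {m : ℕ} (hX : X.HasBoundedIntRep (2 ^ m) (2 ^ m)) (i j : ι) :
    qsize (X i j) ≤ m := by
  obtain ⟨N, D, hD, hDm, hN, rfl⟩ := hX
  refine qsize_le_of_eq_div hD (hN i j) hDm ?_
  simp [div_eq_inv_mul]

lemma mul [Fintype ι] [Nonempty ι] (hX : X.HasBoundedIntRep a b) (hY : Y.HasBoundedIntRep a' b') :
    (X * Y).HasBoundedIntRep (Fintype.card ι * (a * a')) (b * b') := by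
  obtain ⟨N, D, hD, hDb, hN, rfl⟩ := hX
  obtain ⟨N', D', hD', hDb', hN', rfl⟩ := hY
  refine ⟨N * N', D * D', Nat.mul_pos hD hD', Nat.mul_lt_mul'' hDb hDb',
    natAbs_mul_apply_lt hN hN', ?_⟩
  rw [Matrix.map_mul, Matrix.smul_mul, Matrix.mul_smul, smul_smul, Nat.cast_mul, mul_inv]

lemma prod_cons [Fintype ι] [DecidableEq ι] [Nonempty ι] {L : List (Matrix ι ι ℚ)}
    (h : ∀ Z ∈ X :: L, Z.HasBoundedIntRep a b) :
    (X :: L).prod.HasBoundedIntRep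
      (Fintype.card ι ^ L.length * a ^ (L.length + 1)) (b ^ (L.length + 1)) := by
  induction L generalizing X with
  | nil => simpa using h X List.mem_cons_self
  | cons Y L ih =>
    have hrest := ih fun Z hZ => h Z (List.mem_cons_of_mem X hZ)
    convert (h X List.mem_cons_self).mul hrest using 1
    · exact List.prod_cons
    all_goals simp only [List.length_cons]; ring

lemma list_prod [Fintype ι] [DecidableEq ι] [Nonempty ι] {L : List (Matrix ι ι ℚ)} (hL : L ≠ [])
    (h : ∀ Z ∈ L, Z.HasBoundedIntRep a b) :
    L.prod.HasBoundedIntRep (Fintype.card ι ^ (L.length - 1) * a ^ L.length) (b ^ L.length) := by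
  obtain ⟨X, L, rfl⟩ := List.exists_cons_of_ne_nil hL
  simpa using prod_cons h

end HasBoundedIntRep

lemma hasBoundedIntRep_of_qsize_le [Fintype ι] [DecidableEq ι] [Nonempty ι] {X : Matrix ι ι ℚ}
    {s : ℕ} (hX : ∀ i j, qsize (X i j) ≤ s) :
    X.HasBoundedIntRep (2 ^ (Fintype.card ι ^ 2 * s)) (2 ^ (Fintype.card ι ^ 2 * s)) := by
  have hbound : 2 ^ (Fintype.card ι ^ 2 * s) = (2 ^ s) ^ (Finset.univ : Finset (ι × ι)).card := by
    rw [Finset.card_univ, Fintype.card_prod, ← sq, ← pow_mul, mul_comm]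
  let den : ι × ι → ℕ := fun q => (X q.1 q.2).den
  have hden : ∀ q, den q < 2 ^ s := fun q => den_lt_two_pow_of_qsize_le (hX q.1 q.2)
  -- clearing all denominators at once: `N i j = X i j * ∏ q, den q`
  refine ⟨Matrix.of fun i j => (X i j).num * ((∏ q ∈ Finset.univ \ {(i, j)}, den q : ℕ) : ℤ),
    ∏ q, den q, Finset.prod_pos fun q _ => (X q.1 q.2).pos, ?_, fun i j => ?_, ?_⟩
  · exact hbound ▸ Finset.prod_lt_pow_card_of_lt Finset.univ_nonempty fun q _ => hden q
  · rw [Matrix.of_apply, Int.natAbs_mul, Int.natAbs_natCast,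
      ← Finset.prod_update_of_mem (Finset.mem_univ (i, j)), hbound]
    refine Finset.prod_lt_pow_card_of_lt Finset.univ_nonempty fun q _ => ?_
    rcases eq_or_ne q (i, j) with rfl | hq
    · simpa using natAbs_num_lt_two_pow_of_qsize_le (hX i j)
    · simpa [Function.update_of_ne hq] using hden q
  · ext i j
    have hsplit := Finset.prod_eq_mul_prod_sdiff_singleton_of_mem (Finset.mem_univ (i, j)) den
    have hrest : (∏ q ∈ Finset.univ \ {(i, j)}, (den q : ℚ)) ≠ 0 :=
      Finset.prod_ne_zero_iff.mpr fun q _ => Nat.cast_ne_zero.mpr (X q.1 q.2).pos.ne'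
    rw [Matrix.smul_apply, Matrix.map_apply, Matrix.of_apply, hsplit, smul_eq_mul,
      Int.coe_castRingHom]
    push_cast
    conv_lhs => rw [← Rat.num_div_den (X i j)]
    field_simp
    exact (mul_div_cancel_right₀ _ (Nat.cast_ne_zero.mpr (X i j).pos.ne')).symm

end Matrix

/-- On any region of `f^[t]`, the iterate is a product of `t` homogeneous `(d+1)×(d+1)` matrices
taken among the `p` pieces `M` of `f`, the `k`-th factor being `M (σ k)`. -/
theorem size_of_iterates (d p sz : ℕ) (M : Fin p → Matrix (Fin (d + 1)) (Fin (d + 1)) ℚ)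
    (hM : ∀ k i j, qsize (M k i j) ≤ sz) (t : ℕ) (ht : 1 ≤ t) (σ : Fin t → Fin p) :
    ∀ i j, qsize ((((List.finRange t).map fun k => M (σ k)).prod) i j) ≤
      (d + 1) ^ 2 * sz * p * t + (t - 1) * Nat.clog 2 (d + 1) := by
  intro i j
  set c := (d + 1) ^ 2 * sz
  have hp : 0 < p := (σ ⟨0, ht⟩).pos
  have hne : (List.finRange t).map (fun k => M (σ k)) ≠ [] := by
    simpa [List.finRange_eq_nil_iff] using Nat.one_le_iff_ne_zero.mp ht
  have hpieces :
      ∀ Z ∈ (List.finRange t).map (fun k => M (σ k)), Z.HasBoundedIntRep (2 ^ c) (2 ^ c) := by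
    simp only [List.mem_map, List.mem_finRange, true_and, forall_exists_index]
    rintro _ k rfl
    simpa using Matrix.hasBoundedIntRep_of_qsize_le (hM (σ k))
  have hprod := Matrix.HasBoundedIntRep.list_prod hne hpieces
  simp only [List.length_map, List.length_finRange, Fintype.card_fin] at hprod
  have hbits : (d + 1) ^ (t - 1) * (2 ^ c) ^ t ≤ 2 ^ (c * t + (t - 1) * Nat.clog 2 (d + 1)) := by
    calc (d + 1) ^ (t - 1) * (2 ^ c) ^ t ≤ (2 ^ Nat.clog 2 (d + 1)) ^ (t - 1) * (2 ^ c) ^ t := by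
          gcongr; exact Nat.le_pow_clog one_lt_two _
      _ = _ := by rw [← pow_mul, ← pow_mul, ← pow_add]; ring_nf
  have hden : (2 ^ c) ^ t ≤ 2 ^ (c * t + (t - 1) * Nat.clog 2 (d + 1)) := by
    rw [← pow_mul]; exact Nat.pow_le_pow_right two_pos (Nat.le_add_right _ _)
  calc _ ≤ c * t + (t - 1) * Nat.clog 2 (d + 1) := (hprod.mono hbits hden).qsize_le i j
    _ ≤ _ := by gcongr; exact Nat.le_mul_of_pos_right _ hp
end

section
/- If a system of linear inequalities A·x ≤ b with integer matrix A (N×d) and integer vector b has a solution, then it has a rational solution x_s with s(x_s) ≤ (d+1)·L + (2d+1)·log₂(2d+1), where L = max(s(A), s(b)) and s denotes bit-size. -/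
/-- Bit-size of an integer. -/
def isize (z : ℤ) : ℕ := z.natAbs.size

/-!
Push a feasible point along directions orthogonal to its tight rows until the tight rows span
all rows of `A`; then every solution of the tight equations is feasible. Independent tight rows,
completed by unit vectors, form a nonsingular `d × d` integer system with entries of absolute
value at most `2 ^ L`. By Cramer's rule its solution has coordinates `p / q` with `|p|, |q|`
determinants of such matrices, hence at most `d! · 2 ^ (L d)`, whose bit-size is at most
`(d + 1) L + (2 d + 1) log₂ (2 d + 1)`.
-/

open Matrix Module

theorem dotProduct_eq_of_mem_span {n R : Type*} [Fintype n] [CommSemiring R] {s : Set (n → R)}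
    {x y : n → R} (h : ∀ w ∈ s, w ⬝ᵥ x = w ⬝ᵥ y) {w : n → R} (hw : w ∈ Submodule.span R s) :
    w ⬝ᵥ x = w ⬝ᵥ y := by
  induction hw using Submodule.span_induction with
  | mem w hw => exact h w hw
  | zero => simp
  | add u v _ _ hu hv => simp [add_dotProduct, hu, hv]
  | smul c u _ hu => simp [smul_dotProduct, hu]

section Tightening

variable {ι n K : Type*} [Fintype n] [Field K] [LinearOrder K]

variable (a : ι → n → K) (b : ι → K)

def tightSpan (x : n → K) : Submodule K (n → K) :=
  Submodule.span K (a '' {k | a k ⬝ᵥ x = b k})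

variable {a b}

theorem dotProduct_le_of_forall_mem_tightSpan {x y : n → K} (hx : ∀ k, a k ⬝ᵥ x ≤ b k)
    (hspan : ∀ i, a i ∈ tightSpan a b x) (hy : ∀ k, a k ⬝ᵥ x = b k → a k ⬝ᵥ y = b k) (i : ι) :
    a i ⬝ᵥ y ≤ b i := by
  rw [← dotProduct_eq_of_mem_span _ (hspan i)]
  · exact hx i
  · rintro _ ⟨k, hk, rfl⟩
    rw [hk, hy k hk]

variable [IsStrictOrderedRing K]

theorem Submodule.exists_dotProduct_pos_of_notMem {W : Submodule K (n → K)} {u : n → K}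
    (hu : u ∉ W) : ∃ v : n → K, (∀ w ∈ W, w ⬝ᵥ v = 0) ∧ 0 < u ⬝ᵥ v := by
  classical
  obtain ⟨f, hfu, hfW⟩ := W.exists_dual_map_eq_bot_of_notMem hu inferInstance
  set v : n → K := fun j => f (Pi.single j 1)
  have hf : ∀ w, f w = w ⬝ᵥ v := fun w => by
    conv_lhs => rw [pi_eq_sum_univ' w]
    simp [dotProduct, v]
  have hW : ∀ w ∈ W, w ⬝ᵥ v = 0 := fun w hw => by
    rw [← hf, ← LinearMap.mem_ker]; exact (LinearMap.le_ker_iff_map.mpr hfW) hw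
  rcases (hf u ▸ hfu).lt_or_gt with hneg | hpos
  · exact ⟨-v, fun w hw => by simp [hW w hw], by simpa using hneg⟩
  · exact ⟨v, hW, hpos⟩

theorem exists_tightSpan_gt [Finite ι] {y : n → K} (hy : ∀ k, a k ⬝ᵥ y ≤ b k) {i : ι}
    (hi : a i ∉ tightSpan a b y) :
    ∃ y', (∀ k, a k ⬝ᵥ y' ≤ b k) ∧ tightSpan a b y < tightSpan a b y' := by
  obtain ⟨v, hvW, hiv⟩ := Submodule.exists_dotProduct_pos_of_notMem hi
  set slack : ι → K := fun k => (b k - a k ⬝ᵥ y) / (a k ⬝ᵥ v)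
  obtain ⟨k₀, hk₀v, hk₀min⟩ := Set.exists_min_image {k | 0 < a k ⬝ᵥ v} slack
    (Set.toFinite _) ⟨i, hiv⟩
  have hmove : ∀ k, a k ⬝ᵥ (y + slack k₀ • v) = a k ⬝ᵥ y + slack k₀ * (a k ⬝ᵥ v) := fun k => by
    rw [dotProduct_add, dotProduct_smul, smul_eq_mul]
  have htight : ∀ k, a k ⬝ᵥ y = b k → a k ⬝ᵥ (y + slack k₀ • v) = b k := fun k hk => by
    rw [hmove, hvW _ (Submodule.subset_span ⟨k, hk, rfl⟩), mul_zero, add_zero, hk]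
  have hk₀ : a k₀ ⬝ᵥ (y + slack k₀ • v) = b k₀ := by
    rw [hmove, div_mul_cancel₀ _ (ne_of_gt hk₀v)]; ring
  -- Moving along `v` keeps the tight rows tight, and stops when the row `k₀` becomes tight.
  refine ⟨y + slack k₀ • v, fun k => ?_, lt_of_le_of_ne ?_ fun h => ?_⟩
  · rw [hmove]
    rcases lt_or_ge 0 (a k ⬝ᵥ v) with hkv | hkv
    · have := mul_le_mul_of_nonneg_right (hk₀min k hkv) hkv.le
      rw [div_mul_cancel₀ _ hkv.ne'] at this
      linarith
    · have : 0 ≤ slack k₀ := div_nonneg (sub_nonneg.mpr (hy k₀)) hk₀v.le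
      nlinarith [hy k]
  · exact Submodule.span_mono (Set.image_mono fun k hk => htight k hk)
  · have : a k₀ ∈ tightSpan a b y := h ▸ Submodule.subset_span ⟨k₀, hk₀, rfl⟩
    exact hk₀v.ne' (hvW _ this)

theorem exists_forall_mem_tightSpan [Finite ι] {x : n → K} (hx : ∀ k, a k ⬝ᵥ x ≤ b k) :
    ∃ x', (∀ k, a k ⬝ᵥ x' ≤ b k) ∧ ∀ i, a i ∈ tightSpan a b x' := by
  obtain ⟨_, ⟨x', hx', rfl⟩, hmax⟩ := wellFounded_gt.has_min
    (tightSpan a b '' {y | ∀ k, a k ⬝ᵥ y ≤ b k}) ⟨_, x, hx, rfl⟩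
  refine ⟨x', hx', fun i => by_contra fun hi => ?_⟩
  obtain ⟨y, hy, hlt⟩ := exists_tightSpan_gt hx' hi
  exact hmax _ ⟨y, hy, rfl⟩ hlt

end Tightening

section SquareSubsystem

variable {n K : Type*} [Fintype n] [DecidableEq n] [Field K]

theorem exists_basis_subset_union_single (s : Set (n → K)) :
    ∃ e : Basis n K (n → K), (∀ p, e p ∈ s ∨ ∃ j, e p = Pi.single j 1) ∧
      s ⊆ Submodule.span K (Set.range e ∩ s) := by
  obtain ⟨s', hs's, hs'span, hs'li⟩ := exists_linearIndependent K s
  have hsingle : ⊤ ≤ Submodule.span K (s' ∪ Set.range fun j : n => (Pi.single j 1 : n → K)) :=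
    (Pi.basisFun K n).span_eq.symm.trans_le <| Submodule.span_mono <| by
      rintro _ ⟨j, rfl⟩; exact .inr ⟨j, by simp⟩
  let e₀ := Basis.extendLe hs'li Set.subset_union_left hsingle
  refine ⟨e₀.reindex (e₀.indexEquiv (Pi.basisFun K n)), fun p => ?_, fun w hw => ?_⟩
  · rcases Basis.extendLe_subset hs'li _ hsingle (Set.mem_range_self _) with h | ⟨j, hj⟩
    · exact .inl (hs's (by simpa using h))
    · exact .inr ⟨j, by simpa using hj.symm⟩
  · have hs'e : s' ⊆ Set.range e₀ := Basis.subset_extendLe hs'li _ hsingle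
    have hs'sub : s' ⊆ Set.range (e₀.reindex (e₀.indexEquiv (Pi.basisFun K n))) ∩ s :=
      fun v hv => ⟨by simpa using hs'e hv, hs's hv⟩
    exact Submodule.span_mono hs'sub (hs'span ▸ Submodule.subset_span hw)

theorem exists_square_subsystem [CharZero K] {ι : Type*} (A : Matrix ι n ℤ) (b : ι → ℤ)
    (S : Set ι) (x : n → K) (hx : ∀ k ∈ S, A.map Int.cast k ⬝ᵥ x = b k) :
    ∃ (M : Matrix n n ℤ) (c : n → ℤ), M.det ≠ 0 ∧
      (∀ p, (∃ k ∈ S, M p = A k ∧ c p = b k) ∨ ∃ j, M p = Pi.single j 1 ∧ c p = 0) ∧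
      ∀ y : n → K, M.map Int.cast *ᵥ y = (fun p => (c p : K)) →
        ∀ k ∈ S, A.map Int.cast k ⬝ᵥ y = b k := by
  obtain ⟨e, he, hspan⟩ := exists_basis_subset_union_single (A.map (Int.cast : ℤ → K) '' S)
  have hrow : ∀ p, ∃ (r : n → ℤ) (c : ℤ),
      ((∃ k ∈ S, r = A k ∧ c = b k) ∨ ∃ j, r = Pi.single j 1 ∧ c = 0) ∧
      (fun q => (r q : K)) = e p ∧ (e p ∈ A.map Int.cast '' S → e p ⬝ᵥ x = c) := by
    intro p
    by_cases hp : e p ∈ A.map Int.cast '' S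
    · obtain ⟨k, hk, hkp⟩ := hp
      exact ⟨A k, b k, .inl ⟨k, hk, rfl, rfl⟩, hkp, fun _ => hkp ▸ hx k hk⟩
    · obtain ⟨j, hj⟩ := (he p).resolve_left hp
      refine ⟨Pi.single j 1, 0, .inr ⟨j, rfl, rfl⟩, ?_, fun h => absurd h hp⟩
      rw [hj]; ext q; by_cases hq : q = j <;> simp [hq]
  choose r c hform hcast hcx using hrow
  let M : Matrix n n ℤ := Matrix.of r
  have hMrows : M.map (Int.cast : ℤ → K) = Matrix.of e := by ext p q; exact congrFun (hcast p) q
  have hdet : (M.det : K) ≠ 0 := by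
    rw [Int.cast_det, hMrows]
    exact (Matrix.isUnit_iff_isUnit_det _).mp
      (Matrix.linearIndependent_rows_iff_isUnit.mp e.linearIndependent) |>.ne_zero
  refine ⟨M, c, by exact_mod_cast hdet, hform, fun y hy k hk => ?_⟩
  rw [← hx k hk]
  refine (dotProduct_eq_of_mem_span ?_ (hspan ⟨k, hk, rfl⟩)).symm
  rintro _ ⟨⟨p, rfl⟩, hpS⟩
  rw [hcx p hpS, ← congrFun hy p, hMrows]
  rfl

end SquareSubsystem

section BitSize

variable {n : Type*} [Fintype n] [DecidableEq n]

theorem natAbs_le_two_pow_of_isize_le {z : ℤ} {L : ℕ} (h : isize z ≤ L) : z.natAbs ≤ 2 ^ L :=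
  (Nat.size_le.mp h).le

theorem Matrix.mulVec_cramer_div_det {K : Type*} [Field K] [CharZero K] (M : Matrix n n ℤ)
    (c : n → ℤ) (hM : M.det ≠ 0) :
    M.map Int.cast *ᵥ (fun j => (M.cramer c j : K) / M.det) = fun p => (c p : K) := by
  have hcast : M.map Int.cast *ᵥ (fun j => (M.cramer c j : K)) = fun p => (M.det * c p : K) := by
    ext p
    simpa [mulVec_cramer, Function.comp_def] using
      ((Int.castRingHom K).map_mulVec M (M.cramer c) p).symm
  have hdiv : (fun j => (M.cramer c j : K) / M.det) =
      (M.det : K)⁻¹ • fun j => (M.cramer c j : K) := by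
    ext j; simp [div_eq_inv_mul]
  rw [hdiv, mulVec_smul, hcast]
  ext p
  simp [hM]

theorem Matrix.natAbs_det_le {B : ℕ} (M : Matrix n n ℤ) (hM : ∀ i j, (M i j).natAbs ≤ B) :
    M.det.natAbs ≤ (Fintype.card n).factorial * B ^ Fintype.card n := by
  have h := det_le (abv := AbsoluteValue.abs) (x := (B : ℤ)) fun i j => by
    rw [AbsoluteValue.abs_apply, Int.abs_eq_natAbs]; exact_mod_cast hM i j
  rw [AbsoluteValue.abs_apply, Int.abs_eq_natAbs, nsmul_eq_mul] at h
  exact_mod_cast h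

theorem qsize_intCast_div_le {p q : ℤ} {F : ℕ} (hq : q ≠ 0) (hp : p.natAbs ≤ F)
    (hqF : q.natAbs ≤ F) : qsize (p / q) ≤ F.size := by
  rw [← Rat.divInt_eq_div]
  refine max_le (Nat.size_le_size ?_) (Nat.size_le_size ?_)
  · rcases eq_or_ne p 0 with rfl | hp0
    · simp
    · exact (Nat.le_of_dvd (Int.natAbs_pos.mpr hp0)
        (Int.natAbs_dvd_natAbs.mpr (Rat.num_dvd p hq))).trans hp
  · exact (Nat.le_of_dvd (Int.natAbs_pos.mpr hq)
      (by simpa using Int.natAbs_dvd_natAbs.mpr (Rat.den_dvd p q))).trans hqF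

theorem qsize_cramer_div_det_le (M : Matrix n n ℤ) (c : n → ℤ) (hM : M.det ≠ 0) {B : ℕ}
    (hMB : ∀ i j, (M i j).natAbs ≤ B) (hcB : ∀ i, (c i).natAbs ≤ B) (j : n) :
    qsize ((M.cramer c j : ℚ) / M.det) ≤
      ((Fintype.card n).factorial * B ^ Fintype.card n).size := by
  refine qsize_intCast_div_le hM ?_ (M.natAbs_det_le hMB)
  rw [cramer_apply]
  refine natAbs_det_le _ fun p q => ?_
  rw [updateCol_apply]
  split_ifs
  exacts [hcB p, hMB p q]

theorem Nat.size_le_logb_add_one (F : ℕ) : (F.size : ℝ) ≤ Real.logb 2 F + 1 := by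
  have hsize : (F.size : ℝ) ≤ Nat.log 2 F + 1 := mod_cast
    Nat.size_le.mpr (Nat.lt_pow_succ_log_self one_lt_two F)
  have hlog : (Nat.log 2 F : ℝ) ≤ Real.logb 2 F := mod_cast Real.natLog_le_logb F 2
  linarith

theorem size_factorial_mul_pow_le {d : ℕ} (hd : 1 ≤ d) (L : ℕ) :
    ((d.factorial * (2 ^ L) ^ d).size : ℝ) ≤
      ((d : ℝ) + 1) * L + (2 * d + 1) * Real.logb 2 (2 * d + 1) := by
  have hfac : (d.factorial : ℝ) ≤ (2 * d + 1 : ℝ) ^ d := by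
    exact_mod_cast d.factorial_le_pow.trans (Nat.pow_le_pow_left (by omega) d)
  have hlogfac : Real.logb 2 d.factorial ≤ d * Real.logb 2 (2 * d + 1) := by
    rw [← Real.logb_pow]
    exact Real.logb_le_logb_of_le one_lt_two (by positivity) hfac
  have hlog : Real.logb 2 ((d.factorial * (2 ^ L) ^ d : ℕ) : ℝ) =
      Real.logb 2 d.factorial + L * d := by
    push_cast
    rw [Real.logb_mul (by positivity) (by positivity), ← pow_mul, Real.logb_pow,
      Real.logb_self_eq_one one_lt_two]
    push_cast; ring
  have hlog1 : 1 ≤ Real.logb 2 (2 * d + 1) := by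
    rw [Real.le_logb_iff_rpow_le one_lt_two (by positivity)]
    have : (1 : ℝ) ≤ d := by exact_mod_cast hd
    norm_num; linarith
  have := Nat.size_le_logb_add_one (d.factorial * (2 ^ L) ^ d)
  have hL : (0 : ℝ) ≤ L := L.cast_nonneg
  nlinarith

end BitSize

theorem small_rational_solution (N d : ℕ) (A : Matrix (Fin N) (Fin d) ℤ) (b : Fin N → ℤ)
    (L : ℕ)
    (hL : L = max (Finset.univ.sup fun p : Fin N × Fin d => isize (A p.1 p.2))
                  (Finset.univ.sup fun i => isize (b i)))
    (hsol : ∃ x : Fin d → ℝ, ∀ i, ∑ j, (A i j : ℝ) * x j ≤ (b i : ℝ)) :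
    ∃ xs : Fin d → ℚ, (∀ i, ∑ j, (A i j : ℚ) * xs j ≤ (b i : ℚ)) ∧
      ∀ j, (qsize (xs j) : ℝ) ≤
        ((d : ℝ) + 1) * L + (2 * d + 1) * Real.logb 2 (2 * d + 1) := by
  obtain ⟨x₀, hx₀⟩ := hsol
  obtain ⟨x, hx, hspan⟩ :=
    exists_forall_mem_tightSpan (a := A.map (Int.cast : ℤ → ℝ)) (b := fun i => (b i : ℝ)) hx₀
  obtain ⟨M, c, hdet, hrows, hsolves⟩ :=
    exists_square_subsystem A b {k | A.map Int.cast k ⬝ᵥ x = b k} x fun _ hk => hk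
  have hA : ∀ i j, (A i j).natAbs ≤ 2 ^ L := fun i j => natAbs_le_two_pow_of_isize_le <|
    hL ▸ le_max_of_le_left <|
      Finset.le_sup (f := fun p : Fin N × Fin d => isize (A p.1 p.2)) (Finset.mem_univ (i, j))
  have hb : ∀ i, (b i).natAbs ≤ 2 ^ L := fun i => natAbs_le_two_pow_of_isize_le <|
    hL ▸ le_max_of_le_right <| Finset.le_sup (f := fun i => isize (b i)) (Finset.mem_univ i)
  have hMc : ∀ p, (∀ q, (M p q).natAbs ≤ 2 ^ L) ∧ (c p).natAbs ≤ 2 ^ L := fun p => by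
    rcases hrows p with ⟨k, -, hM, hc⟩ | ⟨j, hM, hc⟩
    · exact ⟨fun q => hM ▸ hA k q, hc ▸ hb k⟩
    · refine ⟨fun q => ?_, by simp [hc]⟩
      rw [hM]; by_cases hq : q = j <;> simp [hq, Nat.one_le_two_pow]
  refine ⟨fun j => (M.cramer c j : ℚ) / M.det, fun i => ?_, fun j => ?_⟩
  · rw [← Rat.cast_le (K := ℝ)]
    simp only [Rat.cast_sum, Rat.cast_mul, Rat.cast_div, Rat.cast_intCast]
    exact dotProduct_le_of_forall_mem_tightSpan hx hspan
      (hsolves _ (M.mulVec_cramer_div_det c hdet)) i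
  · calc (qsize _ : ℝ) ≤ ((d.factorial * (2 ^ L) ^ d).size : ℝ) := by
          exact_mod_cast Fintype.card_fin d ▸
            qsize_cramer_div_det_le M c hdet (fun p q => (hMc p).1 q) (fun p => (hMc p).2) j
      _ ≤ _ := size_factorial_mul_pow_le j.pos L
end
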